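/- Let S be an inverse semigroup with zero, G a group, and σ : S^× → G a morphism such that for every g ∈ G the set σ⁻¹(g), whenever nonempty, has a greatest element with respect to the natural partial order. Then S is 0-F-inverse: every element of S^× lies beneath a unique maximal element of (S^×, ≤). -/

import Mathlib

/-!
Comparable nonzero elements have the same degree, because `σ` sends every nonzero idempotent
`e` to `1` (from `σ e = σ (e e) = σ e σ e`). Hence the greatest element `m` of the fibre of
`σ s` lies above `s`, is maximal (anything above it lies in the same fibre, hence below it),
and is the only maximal element above `s` (any such element lies in that fibre, hence below
`m`). Antisymmetry of the natural order rests on the commutation of idempotents.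
-/

/-- An inverse semigroup structure on a semigroup with zero: `star s` is the unique
generalized inverse of `s`. -/
structure IsInvSemigroup (S : Type*) [SemigroupWithZero S] (star : S → S) : Prop where
  mul_star_mul : ∀ s : S, s * star s * s = s
  star_mul_star : ∀ s : S, star s * s * star s = star s
  star_unique : ∀ s t : S, s * t * s = s → t * s * t = t → t = star s

/-- `e` belongs to the semilattice of idempotents `E(S) = {s s* : s ∈ S}`. -/
def IsIdemE {S : Type*} [SemigroupWithZero S] (star : S → S) (e : S) : Prop :=
  ∃ x : S, e = x * star x

/-- The natural partial order on an inverse semigroup: `s ≤ t` iff `s = e t` for some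
idempotent `e`. -/
def natLe {S : Type*} [SemigroupWithZero S] (star : S → S) (s t : S) : Prop :=
  ∃ e : S, IsIdemE star e ∧ s = e * t

/-- `m` is a maximal element of `(S^×, ≤)`. -/
def IsMaxNonzero {S : Type*} [SemigroupWithZero S] (star : S → S) (m : S) : Prop :=
  m ≠ 0 ∧ ∀ t : S, t ≠ 0 → natLe star m t → t = m

/-- `S` is `0`-`F`-inverse: every nonzero element lies beneath a unique maximal element
of `(S^×, ≤)`. -/
def ZeroFInverse {S : Type*} [SemigroupWithZero S] (star : S → S) : Prop :=
  ∀ s : S, s ≠ 0 → ∃! m : S, IsMaxNonzero star m ∧ natLe star s m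

/-- A morphism (grading) `σ : S^× → G`: `σ(st) = σ(s)σ(t)` whenever `st ≠ 0`. -/
def IsGrading {S : Type*} [SemigroupWithZero S] {G : Type*} [Group G] (σ : S → G) : Prop :=
  ∀ s t : S, s ≠ 0 → t ≠ 0 → s * t ≠ 0 → σ (s * t) = σ s * σ t

namespace IsInvSemigroup

variable {S : Type*} [SemigroupWithZero S] {star : S → S}

theorem star_star (h : IsInvSemigroup S star) (s : S) : star (star s) = s :=
  (h.star_unique (star s) s (h.star_mul_star s) (h.mul_star_mul s)).symm

theorem star_eq_self_of_isIdempotentElem (h : IsInvSemigroup S star) {p : S}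
    (hp : IsIdempotentElem p) : star p = p :=
  (h.star_unique p p (by rw [hp.eq, hp.eq]) (by rw [hp.eq, hp.eq])).symm

theorem isIdempotentElem_of_isIdemE (h : IsInvSemigroup S star) {e : S}
    (he : IsIdemE star e) : IsIdempotentElem e := by
  obtain ⟨x, rfl⟩ := he
  change x * star x * (x * star x) = x * star x
  rw [← mul_assoc, h.mul_star_mul]

/-- The classical argument: `f (ef)* e` is again an inverse of `ef`, so it equals `(ef)*`,
which is therefore idempotent, hence self-inverse, hence equal to `ef`. -/
theorem isIdempotentElem_mul (h : IsInvSemigroup S star) {e f : S}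
    (he : IsIdempotentElem e) (hf : IsIdempotentElem f) : IsIdempotentElem (e * f) := by
  set x := star (e * f)
  have he' (y : S) : e * (e * y) = e * y := by rw [← mul_assoc, he.eq]
  have hf' (y : S) : f * (f * y) = f * y := by rw [← mul_assoc, hf.eq]
  have hefxef : e * (f * (x * (e * f))) = e * f := by
    simpa only [mul_assoc] using h.mul_star_mul (e * f)
  have hxef (y : S) : x * (e * (f * (x * y))) = x * y := by
    simpa only [mul_assoc] using congrArg (· * y) (h.star_mul_star (e * f))
  have hfxe : f * x * e = x := by
    apply h.star_unique
    · simp only [mul_assoc, he', hf', hefxef]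
    · simp only [mul_assoc, he', hf', hxef]
  have hx : IsIdempotentElem x := by
    change x * x = x
    calc x * x = f * x * e * (f * x * e) := by rw [hfxe]
      _ = f * (x * (e * (f * (x * e)))) := by simp only [mul_assoc]
      _ = x := by rw [hxef, ← mul_assoc, hfxe]
  have hefx : e * f = x := by rw [← h.star_eq_self_of_isIdempotentElem hx, h.star_star]
  rwa [hefx]

theorem commute_of_isIdempotentElem (h : IsInvSemigroup S star) {e f : S}
    (he : IsIdempotentElem e) (hf : IsIdempotentElem f) : Commute e f := by
  have hef := h.isIdempotentElem_mul he hf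
  have hfe := h.isIdempotentElem_mul hf he
  have h_inv : f * e = star (e * f) := by
    apply h.star_unique
    · calc e * f * (f * e) * (e * f) = e * (f * f) * (e * e) * f := by simp only [mul_assoc]
        _ = e * f := by rw [hf.eq, he.eq, mul_assoc (e * f), hef.eq]
    · calc f * e * (e * f) * (f * e) = f * (e * e) * (f * f) * e := by simp only [mul_assoc]
        _ = f * e := by rw [hf.eq, he.eq, mul_assoc (f * e), hfe.eq]
  rw [Commute, SemiconjBy, h_inv, h.star_eq_self_of_isIdempotentElem hef]

theorem natLe_antisymm (h : IsInvSemigroup S star) {s t : S}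
    (hst : natLe star s t) (hts : natLe star t s) : s = t := by
  obtain ⟨e, heE, rfl⟩ := hst
  obtain ⟨f, hfE, hf_eq⟩ := hts
  have he := h.isIdempotentElem_of_isIdemE heE
  have hf := h.isIdempotentElem_of_isIdemE hfE
  have hft : f * t = t := by rw [hf_eq, ← mul_assoc, hf.eq]
  calc e * t = e * (f * t) := by rw [hft]
    _ = f * e * t := by rw [← mul_assoc, (h.commute_of_isIdempotentElem he hf).eq]
    _ = t := by rw [mul_assoc, ← hf_eq]

end IsInvSemigroup

namespace IsGrading

variable {S G : Type*} [SemigroupWithZero S] [Group G] {σ : S → G}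

theorem map_eq_one_of_isIdempotentElem (hσ : IsGrading σ) {e : S} (he : IsIdempotentElem e)
    (he0 : e ≠ 0) : σ e = 1 := by
  have h_sq : σ e * σ e = σ e := by
    rw [← hσ e e he0 he0 (by rwa [he.eq]), he.eq]
  exact mul_eq_right.mp h_sq

theorem map_eq_of_natLe {star : S → S} (hσ : IsGrading σ) (hinv : IsInvSemigroup S star)
    {a b : S} (ha : a ≠ 0) (hb : b ≠ 0) (hab : natLe star a b) : σ a = σ b := by
  obtain ⟨e, heE, rfl⟩ := hab
  have he0 : e ≠ 0 := by rintro rfl; exact ha (zero_mul b)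
  rw [hσ e b he0 hb ha,
    hσ.map_eq_one_of_isIdempotentElem (hinv.isIdempotentElem_of_isIdemE heE) he0, one_mul]

end IsGrading

/-- if `σ : S^× → G` is a morphism such that every nonempty fibre `σ⁻¹(g)`
has a greatest element with respect to the natural partial order, then `S` is
`0`-`F`-inverse. -/
theorem stmt1 {S G : Type*} [SemigroupWithZero S] [Group G] (star : S → S)
    (hinv : IsInvSemigroup S star)
    (σ : S → G) (hσ : IsGrading σ)
    (hgreatest : ∀ g : G, (∃ s : S, s ≠ 0 ∧ σ s = g) →
      ∃ m : S, m ≠ 0 ∧ σ m = g ∧ ∀ s : S, s ≠ 0 → σ s = g → natLe star s m) :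
    ZeroFInverse star := by
  intro s hs
  obtain ⟨m, hm0, hσm, hm_greatest⟩ := hgreatest (σ s) ⟨s, hs, rfl⟩
  have hm_max : IsMaxNonzero star m := by
    refine ⟨hm0, fun t ht hmt => ?_⟩
    have hσt : σ t = σ s := (hσ.map_eq_of_natLe hinv hm0 ht hmt).symm.trans hσm
    exact hinv.natLe_antisymm (hm_greatest t ht hσt) hmt
  refine ⟨m, ⟨hm_max, hm_greatest s hs rfl⟩, ?_⟩
  rintro m' ⟨hm'_max, hsm'⟩
  have hσm' : σ m' = σ s := (hσ.map_eq_of_natLe hinv hs hm'_max.1 hsm').symm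
  exact (hm'_max.2 m hm0 (hm_greatest m' hm'_max.1 hσm')).symm
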